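/- arXiv:1503.04879 — 3 statements merged into one kernel-verified Lean document; each statement's English description precedes it below -/
import Mathlib

section
/- Maximum principle. Let H satisfy Condition A and f ∈ C(Ω×ℝ). Let J = {c ∈ ℝ : f(x,c)=0 for some x ∈ Ω}, c_inf = inf J, c_sup = sup J, and assume −∞ < c_inf ≤ c_sup < ∞. (i) Suppose f ≤ 0 on Ω×ℝ and u ∈ usc(Ω̄) solves H(Du,D²u)+f(x,u) ≥ 0 in Ω in the viscosity sense. If sup_{∂Ω} u > c_sup or sup_Ω u < c_inf, then u(x) < sup_{∂Ω} u for all x ∈ Ω and sup_{Ω̄} u = sup_{∂Ω} u. (ii) Suppose f ≥ 0 on Ω×ℝ and u ∈ lsc(Ω̄) solves H(Du,D²u)+f(x,u) ≤ 0 in Ω. If inf_{∂Ω} u < c_inf or inf_Ω u > c_sup, then u(x) > inf_{∂Ω} u for all x ∈ Ω and inf_{Ω̄} u = inf_{∂Ω} u. Moreover, if in (i) f(x,t) < 0 for all (x,t) (respectively in (ii) f(x,t) > 0 for all (x,t)), then the corresponding conclusions hold for every u ∈ usc(Ω̄) (resp. u ∈ lsc(Ω̄)) without the stated restrictions on the values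 of u. -/
open Real Set Filter Matrix MeasureTheory

noncomputable section

abbrev EucSp (n : ℕ) := EuclideanSpace ℝ (Fin n)
abbrev Mat (n : ℕ) := Matrix (Fin n) (Fin n) ℝ

/-- A bounded domain: a nonempty bounded open connected set. -/
def IsBoundedDomain {n : ℕ} (Ω : Set (EucSp n)) : Prop :=
  IsOpen Ω ∧ IsConnected Ω ∧ Bornology.IsBounded Ω

/-- The Hessian matrix of `ψ` at `y`. -/
def hessianAt {n : ℕ} (ψ : EucSp n → ℝ) (y : EucSp n) : Mat n :=
  fun i j => iteratedFDeriv ℝ 2 ψ y ![EuclideanSpace.single i 1, EuclideanSpace.single j 1]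

/-- Viscosity sub-solution of `H(Du, D²u) + f(x,u) = 0` in `Ω`. -/
def ViscSubSoln {n : ℕ} (H : EucSp n → Mat n → ℝ) (f : EucSp n → ℝ → ℝ)
    (Ω : Set (EucSp n)) (u : EucSp n → ℝ) : Prop :=
  ∀ ψ : EucSp n → ℝ, ∀ y ∈ Ω, ContDiffAt ℝ 2 ψ y →
    IsLocalMax (fun x => u x - ψ x) y →
    0 ≤ H (gradient ψ y) (hessianAt ψ y) + f y (u y)

/-- Viscosity super-solution of `H(Du, D²u) + f(x,u) = 0` in `Ω`. -/
def ViscSuperSoln {n : ℕ} (H : EucSp n → Mat n → ℝ) (f : EucSp n → ℝ → ℝ)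
    (Ω : Set (EucSp n)) (u : EucSp n → ℝ) : Prop :=
  ∀ ψ : EucSp n → ℝ, ∀ y ∈ Ω, ContDiffAt ℝ 2 ψ y →
    IsLocalMin (fun x => u x - ψ x) y →
    H (gradient ψ y) (hessianAt ψ y) + f y (u y) ≤ 0

def ViscSoln {n : ℕ} (H : EucSp n → Mat n → ℝ) (f : EucSp n → ℝ → ℝ)
    (Ω : Set (EucSp n)) (u : EucSp n → ℝ) : Prop :=
  ViscSubSoln H f Ω u ∧ ViscSuperSoln H f Ω u

/-- `u ∈ C(closure Ω)` solves `H + f = 0` in `Ω` with `u = h` on `∂Ω`. -/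
def SolvesBVP {n : ℕ} (H : EucSp n → Mat n → ℝ) (f : EucSp n → ℝ → ℝ)
    (Ω : Set (EucSp n)) (u h : EucSp n → ℝ) : Prop :=
  ContinuousOn u (closure Ω) ∧ ViscSoln H f Ω u ∧ ∀ x ∈ frontier Ω, u x = h x

/-- Condition A (monotonicity). -/
def CondA {n : ℕ} (H : EucSp n → Mat n → ℝ) : Prop :=
  (∀ p, H p 0 = 0) ∧
  ∀ (p : EucSp n) (X Y : Mat n), X.IsSymm → Y.IsSymm → (Y - X).PosSemidef → H p X ≤ H p Y

/-- Condition B (homogeneity). -/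
def CondB {n : ℕ} (H : EucSp n → Mat n → ℝ) (k₁ k₂ : ℝ) : Prop :=
  0 ≤ k₁ ∧ 0 < k₂ ∧
  (∀ (θ : ℝ) (p : EucSp n) (X : Mat n), H (θ • p) X = |θ| ^ k₁ * H p X) ∧
  (∀ θ : ℝ, 0 < θ → ∀ (p : EucSp n) (X : Mat n), H p (θ • X) = θ ^ k₂ * H p X)

/-- The rank-one matrix `e ⊗ e`. -/
def outer {n : ℕ} (e : EucSp n) : Mat n := fun i j => e i * e j

def m1 {n : ℕ} (H : EucSp n → Mat n → ℝ) (s : ℝ) : ℝ :=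
  min (sInf {r | ∃ e : EucSp n, ‖e‖ = 1 ∧ r = H e (1 - s • outer e)})
      (-sSup {r | ∃ e : EucSp n, ‖e‖ = 1 ∧ r = H e (s • outer e - 1)})

def m2 {n : ℕ} (H : EucSp n → Mat n → ℝ) (s : ℝ) : ℝ :=
  max (sSup {r | ∃ e : EucSp n, ‖e‖ = 1 ∧ r = H e (1 - s • outer e)})
      (-sInf {r | ∃ e : EucSp n, ‖e‖ = 1 ∧ r = H e (s • outer e - 1)})

/-- Condition C (coercivity). -/
def CondC {n : ℕ} (H : EucSp n → Mat n → ℝ) (k₁ k₂ : ℝ) : Prop :=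
  0 < m1 H (k₁ / (k₁ + k₂)) ∧
  ∃ s₁ s₀ ℓ : ℝ, s₁ ≤ 1 ∧ 1 ≤ s₀ ∧ 0 < ℓ ∧
    (∀ s ≤ s₁, 0 < m1 H s) ∧ (∀ s, s₀ ≤ s → m2 H s < -ℓ)

def alphaC (k₁ k₂ : ℝ) : ℝ := (k₁ + 2 * k₂) / (k₁ + k₂)

def sigmaC {n : ℕ} (H : EucSp n → Mat n → ℝ) (k₁ k₂ : ℝ) : ℝ :=
  1 / (alphaC k₁ k₂ * m1 H (k₁ / (k₁ + k₂)) ^ (1 / (k₁ + k₂)))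

/-- Condition (i*). -/
def CondIStar {n : ℕ} (H : EucSp n → Mat n → ℝ) : Prop :=
  ∃ s : ℝ, 1 < s ∧ s < 2 ∧ m2 H s < 0

/-- Condition (ii*). -/
def CondIIStar {n : ℕ} (H : EucSp n → Mat n → ℝ) : Prop :=
  ∃ s : ℝ, 2 ≤ s ∧ ∀ t, s < t → m2 H t < 0

/-- Uniform outer ball condition with radius `ρ`. -/
def UnifOuterBall {n : ℕ} (Ω : Set (EucSp n)) (ρ : ℝ) : Prop :=
  ∀ y ∈ frontier Ω, ∃ z : EucSp n, Metric.ball z ρ ⊆ Ωᶜ ∧ y ∈ Metric.sphere z ρ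

/-- Standing assumption (*). -/
def Standing {n : ℕ} (H : EucSp n → Mat n → ℝ) (Ω : Set (EucSp n)) : Prop :=
  CondIStar H ∨ (CondIIStar H ∧ ∃ ρ > 0, UnifOuterBall Ω ρ)

/-- `spow t k = |t|^(k-1) t`. -/
def spow (t k : ℝ) : ℝ := |t| ^ (k - 1) * t

/-- The set of `λ > 0` such that `H(Du,D²u) + λ a(x)|u|^{k-1}u = 0` in `Ω`, `u = δ` on `∂Ω`,
has a positive solution. -/
def eigenSet {n : ℕ} (H : EucSp n → Mat n → ℝ) (Ω : Set (EucSp n)) (a : EucSp n → ℝ)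
    (k δ : ℝ) : Set ℝ :=
  {l : ℝ | 0 < l ∧ ∃ u : EucSp n → ℝ,
    SolvesBVP H (fun x t => l * a x * spow t k) Ω u (fun _ => δ) ∧
    ∀ x ∈ closure Ω, 0 < u x}

def lamOmega {n : ℕ} (H : EucSp n → Mat n → ℝ) (Ω : Set (EucSp n)) (a : EucSp n → ℝ)
    (k δ : ℝ) : ℝ :=
  sSup (eigenSet H Ω a k δ)

def toVec {n : ℕ} (p : EucSp n) : Fin n → ℝ := p
def ofVec {n : ℕ} (v : Fin n → ℝ) : EucSp n := WithLp.toLp 2 v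

/-- Condition D (invariance under rotations and reflections). -/
def CondD {n : ℕ} (H : EucSp n → Mat n → ℝ) : Prop :=
  ∀ Q : Mat n, Qᵀ * Q = 1 →
    ∀ (p : EucSp n) (X : Mat n), H (ofVec (Q.mulVec (toVec p))) (Q * X * Qᵀ) = H p X

/-!
At an interior maximum point `y` of a viscosity sub-solution `u`, the constant test function
`ψ = 0` touches `u` from above, and since `H(0, O) = 0` the equation reduces to `f(y, u(y)) ≥ 0`.
If `f < 0` this is impossible; if `f ≤ 0` it forces `u(y) ∈ J`, which the assumption on
`sup_{∂Ω} u` or `sup_Ω u` excludes. So the maximum of `u` over the compact set `Ω̄`, which an upper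
semicontinuous function attains, is attained on `∂Ω` only. Super-solutions are the order dual.
-/

theorem IsMaxOn.csSup_image_eq {α β : Type*} [ConditionallyCompleteLattice β] {u : α → β}
    {s : Set α} {y : α} (hmax : IsMaxOn u s y) (hy : y ∈ s) : sSup (u '' s) = u y :=
  IsGreatest.csSup_eq ⟨mem_image_of_mem u hy, forall_mem_image.2 hmax⟩

section MaximumPrinciple

variable {X β : Type*} [TopologicalSpace X] [ConditionallyCompleteLinearOrder β]
  {u : X → β} {Ω : Set X} {J : Set β} {y : X}

theorem sSup_image_frontier_of_forall_not_isMaxOn (hΩ : IsOpen Ω) (hK : IsCompact (closure Ω))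
    (hne : Ω.Nonempty) (hu : UpperSemicontinuousOn u (closure Ω))
    (hno : ∀ y ∈ Ω, ¬IsMaxOn u (closure Ω) y) :
    (∀ x ∈ Ω, u x < sSup (u '' frontier Ω)) ∧
      sSup (u '' closure Ω) = sSup (u '' frontier Ω) := by
  obtain ⟨y, hyK, hmax⟩ := hu.exists_isMaxOn hne.closure hK
  have hyfr : y ∈ frontier Ω := hΩ.frontier_eq ▸ ⟨hyK, fun hy => hno y hy hmax⟩
  have hfr : sSup (u '' frontier Ω) = u y :=
    (hmax.on_subset frontier_subset_closure).csSup_image_eq hyfr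
  refine ⟨fun x hx => hfr ▸ (hmax (subset_closure hx)).lt_of_ne fun hxy => hno x hx ?_, ?_⟩
  · exact fun z hz => hxy ▸ hmax hz
  · rw [hmax.csSup_image_eq hyK, hfr]

theorem sInf_image_frontier_of_forall_not_isMinOn (hΩ : IsOpen Ω) (hK : IsCompact (closure Ω))
    (hne : Ω.Nonempty) (hu : LowerSemicontinuousOn u (closure Ω))
    (hno : ∀ y ∈ Ω, ¬IsMinOn u (closure Ω) y) :
    (∀ x ∈ Ω, sInf (u '' frontier Ω) < u x) ∧
      sInf (u '' closure Ω) = sInf (u '' frontier Ω) :=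
  sSup_image_frontier_of_forall_not_isMaxOn (β := βᵒᵈ) hΩ hK hne hu hno

theorem apply_notMem_of_isMaxOn (hJa : BddAbove J) (hJb : BddBelow J)
    (hfr : (frontier Ω).Nonempty)
    (hsep : sSup J < sSup (u '' frontier Ω) ∨ sSup (u '' Ω) < sInf J)
    (hy : y ∈ Ω) (hmax : IsMaxOn u (closure Ω) y) : u y ∉ J := by
  intro hyJ
  rcases hsep with hsep | hsep
  · have hfr_le : sSup (u '' frontier Ω) ≤ u y :=
      csSup_le (hfr.image u) (forall_mem_image.2 fun x hx => hmax (frontier_subset_closure hx))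
    exact (hfr_le.trans (le_csSup hJa hyJ)).not_gt hsep
  · have hΩ_ge : u y ≤ sSup (u '' Ω) :=
      le_csSup ⟨u y, forall_mem_image.2 fun x hx => hmax (subset_closure hx)⟩
        (mem_image_of_mem u hy)
    exact ((csInf_le hJb hyJ).trans hΩ_ge).not_gt hsep

theorem apply_notMem_of_isMinOn (hJa : BddAbove J) (hJb : BddBelow J)
    (hfr : (frontier Ω).Nonempty)
    (hsep : sInf (u '' frontier Ω) < sInf J ∨ sSup J < sInf (u '' Ω))
    (hy : y ∈ Ω) (hmin : IsMinOn u (closure Ω) y) : u y ∉ J :=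
  apply_notMem_of_isMaxOn (β := βᵒᵈ) hJb hJa hfr hsep hy hmin

end MaximumPrinciple

theorem Bornology.IsBounded.nonempty_frontier {E : Type*} [NormedAddCommGroup E]
    [NormedSpace ℝ E] [Nontrivial E] {s : Set E} (hb : Bornology.IsBounded s)
    (hs : s.Nonempty) : (frontier s).Nonempty :=
  nonempty_frontier_iff.2 ⟨hs, fun h => NormedSpace.unbounded_univ ℝ E (h ▸ hb)⟩

section Viscosity

variable {n : ℕ} {H : EucSp n → Mat n → ℝ} {f : EucSp n → ℝ → ℝ} {Ω : Set (EucSp n)}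
  {u : EucSp n → ℝ} {y : EucSp n}

theorem hessianAt_const (c : ℝ) (y : EucSp n) : hessianAt (fun _ => c) y = 0 := by
  ext i j
  simp [hessianAt, iteratedFDeriv_const_of_ne two_ne_zero]

theorem ViscSubSoln.nonneg_of_isLocalMax (hH : H 0 0 = 0) (hsub : ViscSubSoln H f Ω u)
    (hy : y ∈ Ω) (hmax : IsLocalMax u y) : 0 ≤ f y (u y) := by
  have := hsub (fun _ => 0) y hy contDiffAt_const (by simpa using hmax)
  rwa [gradient_fun_const, hessianAt_const, hH, zero_add] at this

theorem ViscSuperSoln.nonpos_of_isLocalMin (hH : H 0 0 = 0) (hsup : ViscSuperSoln H f Ω u)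
    (hy : y ∈ Ω) (hmin : IsLocalMin u y) : f y (u y) ≤ 0 := by
  have := hsup (fun _ => 0) y hy contDiffAt_const (by simpa using hmin)
  rwa [gradient_fun_const, hessianAt_const, hH, zero_add] at this

end Viscosity

theorem stmt_1_general {n : ℕ} (hn : 2 ≤ n) (Ω : Set (EucSp n)) (hΩ : IsBoundedDomain Ω)
    (H : EucSp n → Mat n → ℝ)
    (hA : CondA H)
    (f : EucSp n → ℝ → ℝ)
    (J : Set ℝ) (hJ : J = {c : ℝ | ∃ x ∈ Ω, f x c = 0})
    (hJbddA : BddAbove J) (hJbddB : BddBelow J) :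
    ((∀ x ∈ Ω, ∀ t : ℝ, f x t ≤ 0) →
      ∀ u : EucSp n → ℝ, UpperSemicontinuousOn u (closure Ω) → ViscSubSoln H f Ω u →
        (sSup J < sSup (u '' frontier Ω) ∨ sSup (u '' Ω) < sInf J) →
        (∀ x ∈ Ω, u x < sSup (u '' frontier Ω)) ∧
          sSup (u '' closure Ω) = sSup (u '' frontier Ω)) ∧
    ((∀ x ∈ Ω, ∀ t : ℝ, 0 ≤ f x t) →
      ∀ u : EucSp n → ℝ, LowerSemicontinuousOn u (closure Ω) → ViscSuperSoln H f Ω u →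
        (sInf (u '' frontier Ω) < sInf J ∨ sSup J < sInf (u '' Ω)) →
        (∀ x ∈ Ω, sInf (u '' frontier Ω) < u x) ∧
          sInf (u '' closure Ω) = sInf (u '' frontier Ω)) ∧
    ((∀ x ∈ Ω, ∀ t : ℝ, f x t < 0) →
      ∀ u : EucSp n → ℝ, UpperSemicontinuousOn u (closure Ω) → ViscSubSoln H f Ω u →
        (∀ x ∈ Ω, u x < sSup (u '' frontier Ω)) ∧
          sSup (u '' closure Ω) = sSup (u '' frontier Ω)) ∧
    ((∀ x ∈ Ω, ∀ t : ℝ, 0 < f x t) →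
      ∀ u : EucSp n → ℝ, LowerSemicontinuousOn u (closure Ω) → ViscSuperSoln H f Ω u →
        (∀ x ∈ Ω, sInf (u '' frontier Ω) < u x) ∧
          sInf (u '' closure Ω) = sInf (u '' frontier Ω)) := by
  obtain ⟨hΩo, hΩc, hΩb⟩ := hΩ
  subst hJ
  have : NeZero n := ⟨by omega⟩
  have hK : IsCompact (closure Ω) := hΩb.isCompact_closure
  have hfr : (frontier Ω).Nonempty := hΩb.nonempty_frontier hΩc.nonempty
  have hnhds : ∀ y ∈ Ω, closure Ω ∈ nhds y := fun y hy =>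
    mem_of_superset (hΩo.mem_nhds hy) subset_closure
  have hsub_nonneg : ∀ {u}, ViscSubSoln H f Ω u → ∀ y ∈ Ω, IsMaxOn u (closure Ω) y →
      0 ≤ f y (u y) := fun hsub y hy hmax =>
    hsub.nonneg_of_isLocalMax (hA.1 0) hy (hmax.isLocalMax (hnhds y hy))
  have hsup_nonpos : ∀ {u}, ViscSuperSoln H f Ω u → ∀ y ∈ Ω, IsMinOn u (closure Ω) y →
      f y (u y) ≤ 0 := fun hsup y hy hmin =>
    hsup.nonpos_of_isLocalMin (hA.1 0) hy (hmin.isLocalMin (hnhds y hy))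
  refine ⟨fun hf u hu hsub hsep => ?_, fun hf u hu hsup hsep => ?_,
    fun hf u hu hsub => ?_, fun hf u hu hsup => ?_⟩
  · refine sSup_image_frontier_of_forall_not_isMaxOn hΩo hK hΩc.nonempty hu fun y hy hmax =>
      apply_notMem_of_isMaxOn hJbddA hJbddB hfr hsep hy hmax ⟨y, hy, ?_⟩
    exact (hf y hy _).antisymm (hsub_nonneg hsub y hy hmax)
  · refine sInf_image_frontier_of_forall_not_isMinOn hΩo hK hΩc.nonempty hu fun y hy hmin =>
      apply_notMem_of_isMinOn hJbddA hJbddB hfr hsep hy hmin ⟨y, hy, ?_⟩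
    exact (hsup_nonpos hsup y hy hmin).antisymm (hf y hy _)
  · exact sSup_image_frontier_of_forall_not_isMaxOn hΩo hK hΩc.nonempty hu fun y hy hmax =>
      (hsub_nonneg hsub y hy hmax).not_gt (hf y hy _)
  · exact sInf_image_frontier_of_forall_not_isMinOn hΩo hK hΩc.nonempty hu fun y hy hmin =>
      (hsup_nonpos hsup y hy hmin).not_gt (hf y hy _)

/-- Maximum principle (Lemma 4.2). -/
theorem stmt_1 {n : ℕ} (hn : 2 ≤ n) (Ω : Set (EucSp n)) (hΩ : IsBoundedDomain Ω)
    (H : EucSp n → Mat n → ℝ) (hH : Continuous fun q : EucSp n × Mat n => H q.1 q.2)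
    (hA : CondA H)
    (f : EucSp n → ℝ → ℝ)
    (hf : ContinuousOn (fun q : EucSp n × ℝ => f q.1 q.2) (Ω ×ˢ (univ : Set ℝ)))
    (J : Set ℝ) (hJ : J = {c : ℝ | ∃ x ∈ Ω, f x c = 0})
    (hJne : J.Nonempty) (hJbddA : BddAbove J) (hJbddB : BddBelow J) :
    ((∀ x ∈ Ω, ∀ t : ℝ, f x t ≤ 0) →
      ∀ u : EucSp n → ℝ, UpperSemicontinuousOn u (closure Ω) → ViscSubSoln H f Ω u →
        (sSup J < sSup (u '' frontier Ω) ∨ sSup (u '' Ω) < sInf J) →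
        (∀ x ∈ Ω, u x < sSup (u '' frontier Ω)) ∧
          sSup (u '' closure Ω) = sSup (u '' frontier Ω)) ∧
    ((∀ x ∈ Ω, ∀ t : ℝ, 0 ≤ f x t) →
      ∀ u : EucSp n → ℝ, LowerSemicontinuousOn u (closure Ω) → ViscSuperSoln H f Ω u →
        (sInf (u '' frontier Ω) < sInf J ∨ sSup J < sInf (u '' Ω)) →
        (∀ x ∈ Ω, sInf (u '' frontier Ω) < u x) ∧
          sInf (u '' closure Ω) = sInf (u '' frontier Ω)) ∧
    ((∀ x ∈ Ω, ∀ t : ℝ, f x t < 0) →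
      ∀ u : EucSp n → ℝ, UpperSemicontinuousOn u (closure Ω) → ViscSubSoln H f Ω u →
        (∀ x ∈ Ω, u x < sSup (u '' frontier Ω)) ∧
          sSup (u '' closure Ω) = sSup (u '' frontier Ω)) ∧
    ((∀ x ∈ Ω, ∀ t : ℝ, 0 < f x t) →
      ∀ u : EucSp n → ℝ, LowerSemicontinuousOn u (closure Ω) → ViscSuperSoln H f Ω u →
        (∀ x ∈ Ω, sInf (u '' frontier Ω) < u x) ∧
          sInf (u '' closure Ω) = sInf (u '' frontier Ω)) :=
  stmt_1_general hn Ω hΩ H hA f J hJ hJbddA hJbddB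

end
end

section
/- Change of variables. Let H satisfy Conditions A and B with k = k₁+k₂. Let f ∈ C(Ω×ℝ) and let ζ : ℝ → ℝ be C² with ζ′ > 0 everywhere; let η = ζ⁻¹ and, for u : Ω → ℝ, set v = ζ∘u. (a) If ζ is convex and u ∈ usc(Ω) solves H(Du,D²u)+f(x,u) ≥ 0 in Ω in the viscosity sense, then v solves H(Dv,D²v)+[η′(v(x))]^{−k} f(x, η(v(x))) ≥ 0 in Ω in the viscosity sense. (b) If ζ is concave and u ∈ lsc(Ω) solves H(Du,D²u)+f(x,u) ≤ 0 in Ω, then v solves H(Dv,D²v)+[η′(v(x))]^{−k} f(x, η(v(x))) ≤ 0 in Ω. -/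
open Real Set Filter Matrix MeasureTheory

noncomputable section

/-!
If `ψ` touches `v = ζ ∘ u` from above at `y`, then `φ = η ∘ (ψ + c)`, with `c` chosen so that
`φ y = u y`, touches `u` from above there, because `ζ` is increasing. Writing `a = ζ'(u y)` and
`b = ζ''(u y)`, the chain rule for `ψ + c = ζ ∘ φ` gives `Dψ = a Dφ` and
`D²ψ = a D²φ + b Dφ ⊗ Dφ`. Convexity makes `b ≥ 0`, so by Condition A and Condition B
`H(Dψ, D²ψ) ≥ H(a Dφ, a D²φ) = a^k H(Dφ, D²φ)`, and `a^k = η'(v y)^(-k)`. The concave case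
reverses the inequalities.
-/

open Topology Function

section Calculus

variable {n : ℕ}

lemma hessianAt_apply (ψ : EucSp n → ℝ) (y : EucSp n) (i j : Fin n) :
    hessianAt ψ y i j =
      fderiv ℝ (fderiv ℝ ψ) y (EuclideanSpace.single i 1) (EuclideanSpace.single j 1) := by
  simp only [hessianAt, iteratedFDeriv_two_apply, Matrix.cons_val_zero, Matrix.cons_val_one]

lemma fderiv_single_eq_gradient (ψ : EucSp n → ℝ) (y : EucSp n) (i : Fin n) :
    fderiv ℝ ψ y (EuclideanSpace.single i 1) = gradient ψ y i := by
  rw [← InnerProductSpace.toDual_symm_apply (𝕜 := ℝ), EuclideanSpace.inner_single_right]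
  simp [gradient]

lemma isSymm_hessianAt {ψ : EucSp n → ℝ} {y : EucSp n} (hψ : ContDiffAt ℝ 2 ψ y) :
    (hessianAt ψ y).IsSymm :=
  Matrix.IsSymm.ext fun i j => by
    rw [hessianAt_apply, hessianAt_apply]
    exact (hψ.isSymmSndFDerivAt (by simp [minSmoothness_of_isRCLikeNormedField])) _ _

lemma Filter.EventuallyEq.hessianAt_eq {φ ψ : EucSp n → ℝ} {y : EucSp n}
    (h : φ =ᶠ[𝓝 y] ψ) : hessianAt φ y = hessianAt ψ y := by
  ext i j
  simp only [hessianAt, (h.iteratedFDeriv ℝ 2).eq_of_nhds]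

lemma gradient_add_const (ψ : EucSp n → ℝ) (c : ℝ) (y : EucSp n) :
    gradient (fun x => ψ x + c) y = gradient ψ y := by
  simp [gradient]

lemma hessianAt_add_const (ψ : EucSp n → ℝ) (c : ℝ) (y : EucSp n) :
    hessianAt (fun x => ψ x + c) y = hessianAt ψ y := by
  have h : fderiv ℝ (fun x => ψ x + c) = fderiv ℝ ψ := funext fun x => fderiv_add_const c
  ext i j
  simp only [hessianAt_apply, h]

lemma gradient_comp {g : ℝ → ℝ} {φ : EucSp n → ℝ} {y : EucSp n}
    (hg : DifferentiableAt ℝ g (φ y)) (hφ : DifferentiableAt ℝ φ y) :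
    gradient (fun x => g (φ x)) y = deriv g (φ y) • gradient φ y := by
  have h : HasFDerivAt (fun x => g (φ x)) (deriv g (φ y) • fderiv ℝ φ y) y :=
    hg.hasDerivAt.comp_hasFDerivAt y hφ.hasFDerivAt
  rw [gradient, gradient, h.fderiv, map_smul]

lemma hessianAt_comp {g : ℝ → ℝ} {φ : EucSp n → ℝ} {y : EucSp n} {b : ℝ}
    (hφ : ContDiffAt ℝ 2 φ y) (hg : ∀ᶠ s in 𝓝 (φ y), DifferentiableAt ℝ g s)
    (hb : HasDerivAt (deriv g) b (φ y)) :
    hessianAt (fun x => g (φ x)) y =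
      deriv g (φ y) • hessianAt φ y + b • outer (gradient φ y) := by
  have hφ' : ∀ᶠ x in 𝓝 y, HasFDerivAt φ (fderiv ℝ φ x) x := by
    filter_upwards [hφ.eventually (by norm_num)] with x hx using
      (hx.differentiableAt two_ne_zero).hasFDerivAt
  have hfderiv : fderiv ℝ (fun x => g (φ x)) =ᶠ[𝓝 y] fun x => deriv g (φ x) • fderiv ℝ φ x := by
    filter_upwards [hφ', hφ.continuousAt.eventually hg] with x hφx hgx using
      (hgx.hasDerivAt.comp_hasFDerivAt x hφx).fderiv
  have hfderiv₂ : fderiv ℝ (fderiv ℝ (fun x => g (φ x))) y =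
      deriv g (φ y) • fderiv ℝ (fderiv ℝ φ) y +
        (b • fderiv ℝ φ y).smulRight (fderiv ℝ φ y) := by
    rw [hfderiv.fderiv_eq]
    exact ((hb.comp_hasFDerivAt y hφ'.self_of_nhds).smul
      ((hφ.fderiv_right (m := 1) (by norm_num)).differentiableAt one_ne_zero).hasFDerivAt).fderiv
  ext i j
  simp only [hessianAt_apply, hfderiv₂, Matrix.add_apply, Matrix.smul_apply, outer, smul_eq_mul,
    _root_.add_apply, FunLike.coe_smul, Pi.smul_apply,
    ContinuousLinearMap.smulRight_apply, fderiv_single_eq_gradient]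
  ring

end Calculus

section LeftInverse

variable {ζ η : ℝ → ℝ} {t : ℝ}

lemma contDiffAt_leftInverse (hζ : ContDiffAt ℝ 2 ζ t) (hζ' : deriv ζ t ≠ 0)
    (hη : LeftInverse η ζ) :
    ContDiffAt ℝ 2 η (ζ t) ∧ ∀ᶠ w in 𝓝 (ζ t), ζ (η w) = w := by
  have hfd := (hζ.differentiableAt two_ne_zero).hasDerivAt.hasFDerivAt_equiv hζ'
  set g := hζ.localInverse hfd two_ne_zero
  have hζg : ∀ᶠ w in 𝓝 (ζ t), ζ (g w) = w :=
    (hζ.hasStrictFDerivAt' hfd two_ne_zero).eventually_right_inverse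
  -- `η` agrees with the local inverse `g` wherever `g` is a right inverse of `ζ`
  have hηg : η =ᶠ[𝓝 (ζ t)] g := hζg.mono fun w hw => by
    rw [← hw, hη, hw]
  refine ⟨(hζ.to_localInverse hfd two_ne_zero).congr_of_eventuallyEq hηg, ?_⟩
  filter_upwards [hζg, hηg] with w hw hηw
  rw [hηw, hw]

lemma hasDerivAt_leftInverse (hζ : ContDiffAt ℝ 2 ζ t) (hζ' : deriv ζ t ≠ 0)
    (hη : LeftInverse η ζ) : HasDerivAt η (deriv ζ t)⁻¹ (ζ t) := by
  obtain ⟨hη₂, hζη⟩ := contDiffAt_leftInverse hζ hζ' hη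
  refine HasDerivAt.of_local_left_inverse hη₂.continuousAt ?_ hζ' hζη
  rw [hη t]
  exact (hζ.differentiableAt two_ne_zero).hasDerivAt

end LeftInverse

section Conditions

variable {n : ℕ} {H : EucSp n → Mat n → ℝ}

lemma isSymm_outer (e : EucSp n) : (outer e).IsSymm :=
  Matrix.IsSymm.ext fun _ _ => mul_comm _ _

lemma posSemidef_outer (e : EucSp n) : (outer e).PosSemidef := by
  have h : outer e = Matrix.vecMulVec (fun i => e i) (star fun i => e i) := by
    ext i j
    simp [outer, Matrix.vecMulVec_apply]
  rw [h]
  exact Matrix.posSemidef_vecMulVec_self_star _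

lemma CondA.apply_le_apply_add_smul_outer (hA : CondA H) {X : Mat n} (hX : X.IsSymm) {b : ℝ}
    (hb : 0 ≤ b) (p q : EucSp n) : H p X ≤ H p (X + b • outer q) :=
  hA.2 p X _ hX (hX.add ((isSymm_outer q).smul b))
    (by rw [add_sub_cancel_left]; exact (posSemidef_outer q).smul hb)

lemma CondB.apply_smul_smul {k₁ k₂ : ℝ} (hB : CondB H k₁ k₂) {a : ℝ} (ha : 0 < a)
    (p : EucSp n) (X : Mat n) : H (a • p) (a • X) = a ^ (k₁ + k₂) * H p X := by
  rw [hB.2.2.2 a ha, hB.2.2.1, abs_of_pos ha, ← mul_assoc, ← Real.rpow_add ha, add_comm k₂]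

end Conditions

section ChangeOfVariables

variable {n : ℕ} {ζ η : ℝ → ℝ}

lemma ContDiff.hasDerivAt_deriv (hζ : ContDiff ℝ 2 ζ) (t : ℝ) :
    HasDerivAt (deriv ζ) (deriv (deriv ζ) t) t :=
  ((contDiff_succ_iff_deriv (n := 1)).mp hζ).2.2.differentiable one_ne_zero t |>.hasDerivAt

lemma deriv_leftInverse_rpow_neg {t : ℝ} (hζ : ContDiffAt ℝ 2 ζ t) (hζ' : 0 < deriv ζ t)
    (hη : LeftInverse η ζ) (k : ℝ) : deriv η (ζ t) ^ (-k) = deriv ζ t ^ k := by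
  rw [(hasDerivAt_leftInverse hζ hζ'.ne' hη).deriv, Real.inv_rpow hζ'.le, Real.rpow_neg hζ'.le,
    inv_inv]

/-- `φ` is `η ∘ (ψ + c)`; the relations are the chain rule for `ψ + c = ζ ∘ φ`. -/
lemma exists_testFunction_comp_eq {t c : ℝ} {ψ : EucSp n → ℝ} {y : EucSp n}
    (hζ : ContDiff ℝ 2 ζ) (hζ' : deriv ζ t ≠ 0) (hη : LeftInverse η ζ)
    (hψ : ContDiffAt ℝ 2 ψ y) (hc : ψ y + c = ζ t) :
    ∃ φ : EucSp n → ℝ, ContDiffAt ℝ 2 φ y ∧ (∀ᶠ x in 𝓝 y, ζ (φ x) = ψ x + c) ∧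
      gradient ψ y = deriv ζ t • gradient φ y ∧
      hessianAt ψ y = deriv ζ t • hessianAt φ y + deriv (deriv ζ) t • outer (gradient φ y) := by
  obtain ⟨hη₂, hζη⟩ := contDiffAt_leftInverse hζ.contDiffAt hζ' hη
  rw [← hc] at hη₂ hζη
  have hψc : ContDiffAt ℝ 2 (fun x => ψ x + c) y := hψ.add contDiffAt_const
  have hφ : ContDiffAt ℝ 2 (fun x => η (ψ x + c)) y := hη₂.comp y hψc
  have hφy : η (ψ y + c) = t := by rw [hc, hη]
  have heq : (fun x => ζ (η (ψ x + c))) =ᶠ[𝓝 y] fun x => ψ x + c :=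
    hψc.continuousAt.eventually hζη
  refine ⟨_, hφ, heq, ?_, ?_⟩
  · rw [← gradient_add_const ψ c, ← heq.gradient_eq,
      gradient_comp (hζ.differentiable two_ne_zero _) (hφ.differentiableAt two_ne_zero), hφy]
  · rw [← hessianAt_add_const ψ c, ← heq.hessianAt_eq,
      hessianAt_comp hφ (.of_forall (hζ.differentiable two_ne_zero))
        (hφy ▸ hζ.hasDerivAt_deriv t), hφy]

lemma isLocalMax_sub_of_comp {u φ ψ : EucSp n → ℝ} {y : EucSp n} {c : ℝ} (hζ : StrictMono ζ)
    (hφ : ∀ᶠ x in 𝓝 y, ζ (φ x) = ψ x + c) (hc : ψ y + c = ζ (u y))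
    (h : IsLocalMax (fun x => ζ (u x) - ψ x) y) : IsLocalMax (fun x => u x - φ x) y := by
  have hφy : φ y = u y := hζ.injective (hφ.self_of_nhds.trans hc)
  filter_upwards [h, hφ] with x hx hφx
  have : u x ≤ φ x := hζ.le_iff_le.mp (by linarith)
  linarith

lemma isLocalMin_sub_of_comp {u φ ψ : EucSp n → ℝ} {y : EucSp n} {c : ℝ} (hζ : StrictMono ζ)
    (hφ : ∀ᶠ x in 𝓝 y, ζ (φ x) = ψ x + c) (hc : ψ y + c = ζ (u y))
    (h : IsLocalMin (fun x => ζ (u x) - ψ x) y) : IsLocalMin (fun x => u x - φ x) y := by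
  have hφy : φ y = u y := hζ.injective (hφ.self_of_nhds.trans hc)
  filter_upwards [h, hφ] with x hx hφx
  have : φ x ≤ u x := hζ.le_iff_le.mp (by linarith)
  linarith

variable {H : EucSp n → Mat n → ℝ} {k₁ k₂ : ℝ} {f : EucSp n → ℝ → ℝ} {Ω : Set (EucSp n)}
  {u : EucSp n → ℝ}

theorem ViscSubSoln.comp_of_convexOn (hA : CondA H) (hB : CondB H k₁ k₂)
    (hζ : ContDiff ℝ 2 ζ) (hζ' : ∀ t, 0 < deriv ζ t) (hη : LeftInverse η ζ)
    (hconv : ConvexOn ℝ univ ζ) (hu : ViscSubSoln H f Ω u) :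
    ViscSubSoln H (fun x s => deriv η s ^ (-(k₁ + k₂)) * f x (η s)) Ω (fun x => ζ (u x)) := by
  intro ψ y hy hψ hmax
  have ha := hζ' (u y)
  obtain ⟨φ, hφ, hζφ, hgrad, hhess⟩ :=
    exists_testFunction_comp_eq (c := ζ (u y) - ψ y) hζ ha.ne' hη hψ (by ring)
  have hsub := hu φ y hy hφ
    (isLocalMax_sub_of_comp (strictMono_of_deriv_pos hζ') hζφ (by ring) hmax)
  have hb : 0 ≤ deriv (deriv ζ) (u y) :=
    (monotoneOn_univ.mp (hconv.monotoneOn_deriv fun s _ =>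
      hζ.differentiable two_ne_zero s)).deriv_nonneg
  have hH : deriv ζ (u y) ^ (k₁ + k₂) * H (gradient φ y) (hessianAt φ y) ≤
      H (gradient ψ y) (hessianAt ψ y) := by
    rw [hgrad, hhess, ← hB.apply_smul_smul ha]
    exact hA.apply_le_apply_add_smul_outer ((isSymm_hessianAt hφ).smul _) hb _ _
  have hscaled := mul_nonneg (Real.rpow_nonneg ha.le (k₁ + k₂)) hsub
  show 0 ≤ H (gradient ψ y) (hessianAt ψ y) +
    deriv η (ζ (u y)) ^ (-(k₁ + k₂)) * f y (η (ζ (u y)))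
  rw [deriv_leftInverse_rpow_neg hζ.contDiffAt ha hη, hη]
  linarith [mul_add (deriv ζ (u y) ^ (k₁ + k₂)) (H (gradient φ y) (hessianAt φ y)) (f y (u y))]

theorem ViscSuperSoln.comp_of_concaveOn (hA : CondA H) (hB : CondB H k₁ k₂)
    (hζ : ContDiff ℝ 2 ζ) (hζ' : ∀ t, 0 < deriv ζ t) (hη : LeftInverse η ζ)
    (hconc : ConcaveOn ℝ univ ζ) (hu : ViscSuperSoln H f Ω u) :
    ViscSuperSoln H (fun x s => deriv η s ^ (-(k₁ + k₂)) * f x (η s)) Ω (fun x => ζ (u x)) := by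
  intro ψ y hy hψ hmin
  have ha := hζ' (u y)
  obtain ⟨φ, hφ, hζφ, hgrad, hhess⟩ :=
    exists_testFunction_comp_eq (c := ζ (u y) - ψ y) hζ ha.ne' hη hψ (by ring)
  have hsuper := hu φ y hy hφ
    (isLocalMin_sub_of_comp (strictMono_of_deriv_pos hζ') hζφ (by ring) hmin)
  have hb : 0 ≤ -deriv (deriv ζ) (u y) :=
    neg_nonneg.mpr (antitoneOn_univ.mp (hconc.antitoneOn_deriv fun s _ =>
      hζ.differentiable two_ne_zero s)).deriv_nonpos
  have hH : H (gradient ψ y) (hessianAt ψ y) ≤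
      deriv ζ (u y) ^ (k₁ + k₂) * H (gradient φ y) (hessianAt φ y) := by
    have hX := ((isSymm_hessianAt hφ).smul (deriv ζ (u y))).add
      ((isSymm_outer (gradient φ y)).smul (deriv (deriv ζ) (u y)))
    rw [hgrad, hhess, ← hB.apply_smul_smul ha]
    simpa using hA.apply_le_apply_add_smul_outer hX hb _ (gradient φ y)
  have hscaled := mul_nonpos_of_nonneg_of_nonpos (Real.rpow_nonneg ha.le (k₁ + k₂)) hsuper
  show H (gradient ψ y) (hessianAt ψ y) +
    deriv η (ζ (u y)) ^ (-(k₁ + k₂)) * f y (η (ζ (u y))) ≤ 0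
  rw [deriv_leftInverse_rpow_neg hζ.contDiffAt ha hη, hη]
  linarith [mul_add (deriv ζ (u y) ^ (k₁ + k₂)) (H (gradient φ y) (hessianAt φ y)) (f y (u y))]

end ChangeOfVariables

theorem stmt_5_general {n : ℕ} (Ω : Set (EucSp n))
    (H : EucSp n → Mat n → ℝ)
    (k₁ k₂ : ℝ) (hA : CondA H) (hB : CondB H k₁ k₂)
    (f : EucSp n → ℝ → ℝ)
    (ζ η : ℝ → ℝ) (hζ : ContDiff ℝ 2 ζ) (hζ' : ∀ t, 0 < deriv ζ t)
    (hη : Function.LeftInverse η ζ)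
    (u : EucSp n → ℝ) :
    (ConvexOn ℝ univ ζ → UpperSemicontinuousOn u Ω → ViscSubSoln H f Ω u →
      ViscSubSoln H (fun x s => deriv η s ^ (-(k₁ + k₂)) * f x (η s)) Ω
        (fun x => ζ (u x))) ∧
    (ConcaveOn ℝ univ ζ → LowerSemicontinuousOn u Ω → ViscSuperSoln H f Ω u →
      ViscSuperSoln H (fun x s => deriv η s ^ (-(k₁ + k₂)) * f x (η s)) Ω
        (fun x => ζ (u x))) :=
  ⟨fun hconv _ hu => hu.comp_of_convexOn hA hB hζ hζ' hη hconv,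
    fun hconc _ hu => hu.comp_of_concaveOn hA hB hζ hζ' hη hconc⟩

/-- Change of variables (Lemma 5.5). -/
theorem stmt_5 {n : ℕ} (hn : 2 ≤ n) (Ω : Set (EucSp n)) (hΩ : IsBoundedDomain Ω)
    (H : EucSp n → Mat n → ℝ) (hH : Continuous fun q : EucSp n × Mat n => H q.1 q.2)
    (k₁ k₂ : ℝ) (hA : CondA H) (hB : CondB H k₁ k₂)
    (f : EucSp n → ℝ → ℝ)
    (hf : ContinuousOn (fun q : EucSp n × ℝ => f q.1 q.2) (Ω ×ˢ (univ : Set ℝ)))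
    (ζ η : ℝ → ℝ) (hζ : ContDiff ℝ 2 ζ) (hζ' : ∀ t, 0 < deriv ζ t)
    (hη : Function.LeftInverse η ζ)
    (u : EucSp n → ℝ) :
    (ConvexOn ℝ univ ζ → UpperSemicontinuousOn u Ω → ViscSubSoln H f Ω u →
      ViscSubSoln H (fun x s => deriv η s ^ (-(k₁ + k₂)) * f x (η s)) Ω
        (fun x => ζ (u x))) ∧
    (ConcaveOn ℝ univ ζ → LowerSemicontinuousOn u Ω → ViscSuperSoln H f Ω u →
      ViscSuperSoln H (fun x s => deriv η s ^ (-(k₁ + k₂)) * f x (η s)) Ω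
        (fun x => ζ (u x))) :=
  stmt_5_general Ω H k₁ k₂ hA hB f ζ η hζ hζ' hη u
end
end

section
/- Harnack inequality and Hölder continuity. Let H satisfy Conditions A, B and C, assume condition (i*) holds with 1 < s̄ < 2 and set β = 2−s̄ ∈ (0,1). Let a ∈ C(Ω)∩L^∞(Ω) with inf_Ω a > 0 and let λ ≥ 0. Suppose w ∈ lsc(Ω)∩L^∞(Ω), w ≥ 0, solves H(Dw,D²w)+λ a(x)|w|^{k−1}w ≤ 0 in Ω in the viscosity sense. Then there is a constant C > 0 depending only on β such that for every y ∈ Ω and R > 0 with B_{4R}(y) ⊂ Ω: sup_{B_R(y)} w ≤ C·inf_{B_R(y)} w, and |w(x)−w(z)| ≤ (3R)^{−β}·(sup_{B_R(y)} w)·|x−z|^β for all x, z ∈ B_R(y). -/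
open Real Set Filter Matrix MeasureTheory

noncomputable section

/-! The function `w` is compared on `closedBall z (3R)` with the downward cusp
`ψ(x) = w z - c ‖x - z‖^β`, `c = (3R)^(-β) sup_{B_R} w`. Away from `z` the Hessian of `ψ` is a positive
multiple of `(2 - β) e ⊗ e - I` with `2 - β = s̄`, so by homogeneity and `m₂(s̄) < 0` we get
`H(Dψ, D²ψ) > 0`, while the zeroth-order term is nonnegative: `ψ` cannot touch `w` from below at an
interior point `≠ z`. Since `w - ψ` vanishes at `z` and is nonnegative on the sphere, its minimum is
`≥ 0`, i.e. `w z - w x ≤ c ‖x - z‖^β`. Exchanging `x, z` gives the Hölder bound, and taking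
`‖x - z‖ < 2R` gives `(1 - (2/3)^β) sup w ≤ inf w`, the Harnack inequality. -/

open Topology

section RadialCalculus

variable {F : Type*} [NormedAddCommGroup F] [InnerProductSpace ℝ F]

theorem hasFDerivAt_norm_sub_sq (z x : F) :
    HasFDerivAt (fun y => ‖y - z‖ ^ 2) ((2 : ℝ) • innerSL ℝ (x - z)) x := by
  refine ((hasFDerivAt_id x).sub_const z).norm_sq.congr_fderiv ?_
  ext u
  simp [two_smul]

variable {g g' : ℝ → ℝ} {d g'' : ℝ} {z x₀ : F}

theorem HasDerivAt.hasFDerivAt_comp_norm_sub_sq (hg : HasDerivAt g d (‖x₀ - z‖ ^ 2)) :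
    HasFDerivAt (fun y => g (‖y - z‖ ^ 2)) ((2 * d) • innerSL ℝ (x₀ - z)) x₀ := by
  have h := hg.comp_hasFDerivAt x₀ (hasFDerivAt_norm_sub_sq z x₀)
  rwa [smul_smul, mul_comm] at h

theorem HasDerivAt.hasGradientAt_comp_norm_sub_sq [CompleteSpace F]
    (hg : HasDerivAt g d (‖x₀ - z‖ ^ 2)) :
    HasGradientAt (fun y => g (‖y - z‖ ^ 2)) ((2 * d) • (x₀ - z)) x₀ := by
  rw [hasGradientAt_iff_hasFDerivAt]
  refine hg.hasFDerivAt_comp_norm_sub_sq.congr_fderiv ?_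
  ext u
  simp

theorem fderiv_fderiv_comp_norm_sub_sq_apply
    (hg : ∀ᶠ t in 𝓝 (‖x₀ - z‖ ^ 2), HasDerivAt g (g' t) t)
    (hg' : HasDerivAt g' g'' (‖x₀ - z‖ ^ 2)) (u v : F) :
    fderiv ℝ (fderiv ℝ fun y => g (‖y - z‖ ^ 2)) x₀ u v =
      2 * g' (‖x₀ - z‖ ^ 2) * inner ℝ u v + 4 * g'' * inner ℝ (x₀ - z) u * inner ℝ (x₀ - z) v := by
  have hfderiv : fderiv ℝ (fun y => g (‖y - z‖ ^ 2)) =ᶠ[𝓝 x₀]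
      fun x => (2 * g' (‖x - z‖ ^ 2)) • innerSL ℝ (x - z) := by
    have hq : Continuous fun y : F => ‖y - z‖ ^ 2 := by fun_prop
    filter_upwards [hq.continuousAt.tendsto.eventually hg] with x hx
    exact hx.hasFDerivAt_comp_norm_sub_sq.fderiv
  have hcoeff : HasFDerivAt (fun x => 2 * g' (‖x - z‖ ^ 2))
      ((2 * (2 * g'')) • innerSL ℝ (x₀ - z)) x₀ := by
    simpa [smul_smul] using (hg'.hasFDerivAt_comp_norm_sub_sq (z := z)).const_mul 2
  have hinner : HasFDerivAt (fun x => innerSL ℝ (x - z)) (innerSL ℝ : F →L[ℝ] F →L[ℝ] ℝ) x₀ := by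
    simpa using ((innerSL ℝ : F →L[ℝ] F →L[ℝ] ℝ).hasFDerivAt (x := x₀)).sub_const
      (innerSL ℝ z)
  rw [hfderiv.fderiv_eq, (hcoeff.fun_smul hinner).fderiv]
  simp only [_root_.add_apply, _root_.smul_apply, ContinuousLinearMap.smulRight_apply,
    innerSL_apply_apply, smul_eq_mul]
  rw [innerSL_apply_apply]
  ring

end RadialCalculus

section Hessian

variable {n : ℕ}

theorem outer_smul (a : ℝ) (v : EucSp n) : outer (a • v) = (a * a) • outer v := by
  ext i j
  simp only [outer, PiLp.smul_apply, Matrix.smul_apply, smul_eq_mul]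
  ring

theorem hessianAt_comp_norm_sub_sq {g g' : ℝ → ℝ} {g'' : ℝ} {z x₀ : EucSp n}
    (hg : ∀ᶠ t in 𝓝 (‖x₀ - z‖ ^ 2), HasDerivAt g (g' t) t)
    (hg' : HasDerivAt g' g'' (‖x₀ - z‖ ^ 2)) :
    hessianAt (fun y => g (‖y - z‖ ^ 2)) x₀ =
      (2 * g' (‖x₀ - z‖ ^ 2)) • (1 : Mat n) + (4 * g'') • outer (x₀ - z) := by
  ext i j
  rw [hessianAt, iteratedFDeriv_two_apply, fderiv_fderiv_comp_norm_sub_sq_apply hg hg']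
  simp only [Matrix.cons_val_zero, Matrix.cons_val_one, EuclideanSpace.inner_single_right,
    PiLp.single_apply, Matrix.add_apply, Matrix.smul_apply, Matrix.one_apply, outer, smul_eq_mul]
  by_cases hij : i = j <;> simp [hij, eq_comm] <;> ring

end Hessian

theorem sq_rpow {r : ℝ} (hr : 0 ≤ r) (p : ℝ) : (r ^ 2) ^ p = r ^ (2 * p) := by
  rw [← Real.rpow_natCast_mul hr]
  norm_num

theorem hasDerivAt_const_sub_mul_rpow (A c : ℝ) {t : ℝ} (ht : t ≠ 0) (p : ℝ) :
    HasDerivAt (fun t => A - c * t ^ p) (-(c * (p * t ^ (p - 1)))) t :=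
  ((Real.hasDerivAt_rpow_const (Or.inl ht)).const_mul c).const_sub A

section Barrier

variable {n : ℕ}

def barrier (z : EucSp n) (A c β : ℝ) (x : EucSp n) : ℝ := A - c * ‖x - z‖ ^ β

variable {z x₀ : EucSp n} {A c β : ℝ}

theorem barrier_eq_comp_norm_sub_sq :
    barrier z A c β = fun x => A - c * (‖x - z‖ ^ 2) ^ (β / 2) := by
  ext x
  rw [barrier, sq_rpow (norm_nonneg _), mul_div_cancel₀ β two_ne_zero]

theorem barrier_self (hβ : 0 < β) : barrier z A c β z = A := by
  simp [barrier, Real.zero_rpow hβ.ne']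

theorem continuous_barrier (hβ : 0 < β) : Continuous (barrier z A c β) :=
  continuous_const.sub (continuous_const.mul
    ((continuous_id.sub continuous_const).norm.rpow_const fun _ => Or.inr hβ.le))

theorem contDiffAt_barrier (hx₀ : x₀ ≠ z) : ContDiffAt ℝ 2 (barrier z A c β) x₀ := by
  have hq : ‖x₀ - z‖ ^ 2 ≠ 0 := pow_ne_zero 2 (norm_ne_zero_iff.2 (sub_ne_zero.2 hx₀))
  rw [barrier_eq_comp_norm_sub_sq]
  exact contDiffAt_const.sub (contDiffAt_const.mul
    (((contDiffAt_id.sub contDiffAt_const).norm_sq ℝ).rpow_const_of_ne hq))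

theorem gradient_barrier (hx₀ : x₀ ≠ z) :
    gradient (barrier z A c β) x₀ = (-(c * β * ‖x₀ - z‖ ^ (β - 2))) • (x₀ - z) := by
  have hq : ‖x₀ - z‖ ^ 2 ≠ 0 := pow_ne_zero 2 (norm_ne_zero_iff.2 (sub_ne_zero.2 hx₀))
  rw [barrier_eq_comp_norm_sub_sq,
    (hasDerivAt_const_sub_mul_rpow A c hq (β / 2)).hasGradientAt_comp_norm_sub_sq.gradient,
    sq_rpow (norm_nonneg _)]
  ring_nf

theorem hessianAt_barrier (hx₀ : x₀ ≠ z) :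
    hessianAt (barrier z A c β) x₀ = (c * β * ‖x₀ - z‖ ^ (β - 2)) •
      ((2 - β) • outer (‖x₀ - z‖⁻¹ • (x₀ - z)) - 1) := by
  set r := ‖x₀ - z‖
  have hr : 0 < r := norm_pos_iff.2 (sub_ne_zero.2 hx₀)
  have hq : r ^ 2 ≠ 0 := by positivity
  have hg : ∀ᶠ t in 𝓝 (r ^ 2), HasDerivAt (fun t => A - c * t ^ (β / 2))
      (-(c * (β / 2 * t ^ (β / 2 - 1)))) t := by
    filter_upwards [eventually_ne_nhds hq] with t ht
    exact hasDerivAt_const_sub_mul_rpow A c ht _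
  have hg' := (((Real.hasDerivAt_rpow_const (p := β / 2 - 1) (Or.inl hq)).const_mul
    (β / 2)).const_mul c).neg
  have hrpow : r ^ (2 * (β / 2 - 1 - 1)) = r ^ (β - 2) * (r⁻¹ * r⁻¹) := by
    rw [show 2 * (β / 2 - 1 - 1) = (β - 2) + (-2 : ℤ) by push_cast; ring,
      Real.rpow_add hr, Real.rpow_intCast]
    simp [_root_.zpow_neg, sq]
  rw [barrier_eq_comp_norm_sub_sq, hessianAt_comp_norm_sub_sq hg hg', outer_smul,
    sq_rpow hr.le, sq_rpow hr.le, hrpow, show 2 * (β / 2 - 1) = β - 2 by ring]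
  module

theorem barrier_of_norm_eq {z x : EucSp n} {S ρ : ℝ} (hρ : 0 < ρ) (hx : ‖x - z‖ = ρ) :
    barrier z A (ρ ^ (-β) * S) β x = A - S := by
  rw [barrier, hx, mul_right_comm, ← Real.rpow_add hρ, neg_add_cancel, Real.rpow_zero, one_mul]

end Barrier

theorem pos_of_mem_of_sInf_pos {S : Set ℝ} (hS : 0 < sInf S) {x : ℝ} (hx : x ∈ S) : 0 < x := by
  -- a set of reals that is not bounded below has `sInf = 0`
  have hbdd : BddBelow S := by
    by_contra h
    exact hS.ne' (Real.sInf_of_not_bddBelow h)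
  exact hS.trans_le (csInf_le hbdd hx)

theorem sSup_le_inv_mul_sInf {α : Type*} {B : Set α} {w : α → ℝ} (hB : B.Nonempty) {δ : ℝ}
    (hδ : δ < 1)
    (h : ∀ x ∈ B, ∀ z ∈ B, w z - δ * sSup (w '' B) ≤ w x) :
    sSup (w '' B) ≤ (1 - δ)⁻¹ * sInf (w '' B) := by
  have hlow : ∀ x ∈ B, (1 - δ) * sSup (w '' B) ≤ w x := by
    intro x hx
    have : sSup (w '' B) ≤ w x + δ * sSup (w '' B) := by
      refine csSup_le (hB.image w) ?_
      rintro _ ⟨z, hz, rfl⟩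
      linarith [h x hx z hz]
    linarith
  have hinf : (1 - δ) * sSup (w '' B) ≤ sInf (w '' B) :=
    le_csInf (hB.image w) (by rintro _ ⟨x, hx, rfl⟩; exact hlow x hx)
  rw [← div_eq_inv_mul, le_div_iff₀ (by linarith)]
  linarith

theorem rpow_neg_mul_norm_rpow_le_of_mem_ball {E : Type*} [SeminormedAddCommGroup E]
    {x y z : E} {R β : ℝ} (hβ : 0 ≤ β) (hx : x ∈ Metric.ball y R) (hz : z ∈ Metric.ball y R) :
    (3 * R) ^ (-β) * ‖x - z‖ ^ β ≤ (2 / 3) ^ β := by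
  rw [Metric.mem_ball] at hx hz
  have hR : 0 < R := dist_nonneg.trans_lt hx
  rw [Real.rpow_neg (by positivity), inv_mul_eq_div,
    ← Real.div_rpow (norm_nonneg _) (by positivity)]
  refine Real.rpow_le_rpow (by positivity) ?_ hβ
  rw [div_le_iff₀ (by positivity), ← dist_eq_norm]
  linarith [dist_triangle_right x z y]

section Comparison

variable {n : ℕ} {H : EucSp n → Mat n → ℝ} {k₁ k₂ s : ℝ}

theorem CondB.pos_of_m2_neg (hB : CondB H k₁ k₂) (hm2 : m2 H s < 0) {e : EucSp n}
    (he : ‖e‖ = 1) {θ μ : ℝ} (hθ : θ ≠ 0) (hμ : 0 < μ) :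
    0 < H (θ • e) (μ • (s • outer e - 1)) := by
  have hT : 0 < sInf {r | ∃ e : EucSp n, ‖e‖ = 1 ∧ r = H e (s • outer e - 1)} := by
    have := (le_max_right _ _).trans_lt hm2
    linarith
  rw [hB.2.2.1, hB.2.2.2 μ hμ]
  have := pos_of_mem_of_sInf_pos hT ⟨e, he, rfl⟩
  positivity

variable {Ω : Set (EucSp n)} {f : EucSp n → ℝ → ℝ} {w : EucSp n → ℝ} {β : ℝ}

theorem not_isLocalMin_sub_barrier (hB : CondB H k₁ k₂) (hm2 : m2 H (2 - β) < 0)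
    (hsuper : ViscSuperSoln H f Ω w) {y₀ z : EucSp n} (hy₀ : y₀ ∈ Ω) (hf : 0 ≤ f y₀ (w y₀))
    (hy₀z : y₀ ≠ z) {A c : ℝ} (hc : 0 < c) (hβ : 0 < β) :
    ¬IsLocalMin (fun x => w x - barrier z A c β x) y₀ := by
  intro hmin
  have hvisc := hsuper _ y₀ hy₀ (contDiffAt_barrier hy₀z) hmin
  set r := ‖y₀ - z‖
  have hr : 0 < r := norm_pos_iff.2 (sub_ne_zero.2 hy₀z)
  set μ := c * β * r ^ (β - 2)
  have hμ : 0 < μ := by positivity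
  have hgrad : gradient (barrier z A c β) y₀ = (-μ * r) • (r⁻¹ • (y₀ - z)) := by
    rw [gradient_barrier hy₀z, smul_smul, mul_assoc (-μ), mul_inv_cancel₀ hr.ne', mul_one]
  have he : ‖r⁻¹ • (y₀ - z)‖ = 1 := by
    rw [norm_smul, norm_inv, norm_norm, inv_mul_cancel₀ hr.ne']
  have hpos := hB.pos_of_m2_neg hm2 he (mul_ne_zero (neg_ne_zero.2 hμ.ne') hr.ne') hμ
  rw [hgrad, hessianAt_barrier hy₀z] at hvisc
  linarith

theorem sub_mul_norm_rpow_le_of_viscSuperSoln (hB : CondB H k₁ k₂) (hm2 : m2 H (2 - β) < 0)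
    (hβ : 0 < β) (hsuper : ViscSuperSoln H f Ω w) (hf : ∀ x ∈ Ω, 0 ≤ f x (w x))
    (hwl : LowerSemicontinuousOn w Ω) (hw0 : ∀ x ∈ Ω, 0 ≤ w x) {z : EucSp n} {ρ S : ℝ}
    (hρ : 0 < ρ) (hK : Metric.closedBall z ρ ⊆ Ω) (hS : w z ≤ S) {x : EucSp n}
    (hx : x ∈ Metric.closedBall z ρ) :
    w z - ρ ^ (-β) * S * ‖x - z‖ ^ β ≤ w x := by
  have hz : z ∈ Metric.closedBall z ρ := Metric.mem_closedBall_self hρ.le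
  rcases (hw0 z (hK hz)).trans hS |>.eq_or_lt with hS0 | hS0
  · have := hw0 x (hK hx)
    rw [← hS0] at hS ⊢
    simp only [mul_zero, zero_mul]
    linarith
  set ψ := barrier z (w z) (ρ ^ (-β) * S) β
  suffices 0 ≤ w x - ψ x by simp only [ψ, barrier] at this; linarith
  obtain ⟨y₀, hy₀, hmin⟩ := ((hwl.mono hK).add
      ((continuous_barrier hβ).neg.lowerSemicontinuous.lowerSemicontinuousOn _)).exists_isMinOn
    ⟨z, hz⟩ (isCompact_closedBall z ρ)
  refine le_trans ?_ (hmin hx)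
  by_contra! hneg
  have hy₀z : y₀ ≠ z := by
    rintro rfl
    simp [barrier_self hβ] at hneg
  have hy₀ρ : y₀ ∈ Metric.ball z ρ := by
    refine (Metric.mem_closedBall.1 hy₀).lt_of_ne fun hρ' => ?_
    rw [dist_eq_norm] at hρ'
    rw [Pi.neg_apply, barrier_of_norm_eq hρ hρ'] at hneg
    linarith [hw0 y₀ (hK hy₀)]
  exact not_isLocalMin_sub_barrier hB hm2 hsuper (hK hy₀) (hf y₀ (hK hy₀)) hy₀z
    (by positivity) hβ (hmin.isLocalMin (Metric.closedBall_mem_nhds_of_mem hy₀ρ))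

theorem sub_mul_norm_rpow_le_of_mem_ball (hB : CondB H k₁ k₂) (hm2 : m2 H (2 - β) < 0)
    (hβ : 0 < β) (hsuper : ViscSuperSoln H f Ω w) (hf : ∀ x ∈ Ω, 0 ≤ f x (w x))
    (hwl : LowerSemicontinuousOn w Ω) (hw0 : ∀ x ∈ Ω, 0 ≤ w x) {y : EucSp n} {R : ℝ}
    (hR : 0 < R) (h4R : Metric.ball y (4 * R) ⊆ Ω) (hbdd : BddAbove (w '' Metric.ball y R))
    {x z : EucSp n} (hx : x ∈ Metric.ball y R) (hz : z ∈ Metric.ball y R) :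
    w z - (3 * R) ^ (-β) * sSup (w '' Metric.ball y R) * ‖x - z‖ ^ β ≤ w x := by
  rw [Metric.mem_ball] at hx hz
  refine sub_mul_norm_rpow_le_of_viscSuperSoln hB hm2 hβ hsuper hf hwl hw0 (by linarith)
    ((Metric.closedBall_subset_ball' (by linarith)).trans h4R) (le_csSup hbdd ⟨z, hz, rfl⟩) ?_
  rw [Metric.mem_closedBall]
  linarith [dist_triangle_right x z y]

end Comparison

theorem stmt_18_general {n : ℕ} (Ω : Set (EucSp n))
    (H : EucSp n → Mat n → ℝ)
    (k₁ k₂ : ℝ) (hB : CondB H k₁ k₂)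
    (sb : ℝ) (hsb2 : sb < 2) (hm2 : m2 H sb < 0)
    (β : ℝ) (hβ : β = 2 - sb)
    (a : EucSp n → ℝ)
    (hainf : 0 < sInf (a '' Ω))
    (lam : ℝ) (hlam : 0 ≤ lam)
    (w : EucSp n → ℝ) (hwl : LowerSemicontinuousOn w Ω)
    (hwb : ∃ M : ℝ, ∀ x ∈ Ω, |w x| ≤ M) (hw0 : ∀ x ∈ Ω, 0 ≤ w x)
    (hsuper : ViscSuperSoln H (fun x t => lam * a x * spow t (k₁ + k₂)) Ω w) :
    ∃ C > (0 : ℝ), ∀ y ∈ Ω, ∀ R : ℝ, 0 < R → Metric.ball y (4 * R) ⊆ Ω →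
      sSup (w '' Metric.ball y R) ≤ C * sInf (w '' Metric.ball y R) ∧
      ∀ x ∈ Metric.ball y R, ∀ z ∈ Metric.ball y R,
        |w x - w z| ≤ (3 * R) ^ (-β) * sSup (w '' Metric.ball y R) * ‖x - z‖ ^ β := by
  have hβ0 : 0 < β := by linarith
  have hm2' : m2 H (2 - β) < 0 := by rwa [hβ, sub_sub_cancel]
  have hf : ∀ x ∈ Ω, 0 ≤ lam * a x * spow (w x) (k₁ + k₂) := fun x hx =>
    mul_nonneg (mul_nonneg hlam (pos_of_mem_of_sInf_pos hainf ⟨x, hx, rfl⟩).le)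
      (mul_nonneg (by positivity) (hw0 x hx))
  have hδ : ((2 : ℝ) / 3) ^ β < 1 := Real.rpow_lt_one (by norm_num) (by norm_num) hβ0
  refine ⟨(1 - (2 / 3) ^ β)⁻¹, inv_pos.2 (by linarith), fun y hy R hR h4R => ?_⟩
  obtain ⟨M, hM⟩ := hwb
  set S := sSup (w '' Metric.ball y R)
  have hbdd : BddAbove (w '' Metric.ball y R) := ⟨M, by
    rintro _ ⟨x, hx, rfl⟩
    exact (abs_le.1 (hM x (h4R (Metric.ball_subset_ball (by linarith) hx)))).2⟩
  have hS0 : 0 ≤ S := (hw0 y hy).trans (le_csSup hbdd ⟨y, Metric.mem_ball_self hR, rfl⟩)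
  have hkey := fun x (hx : x ∈ Metric.ball y R) z (hz : z ∈ Metric.ball y R) =>
    sub_mul_norm_rpow_le_of_mem_ball hB hm2' hβ0 hsuper hf hwl hw0 hR h4R hbdd hx hz
  refine ⟨sSup_le_inv_mul_sInf (Metric.nonempty_ball.2 hR) hδ fun x hx z hz => ?_,
    fun x hx z hz => abs_sub_le_iff.2 ⟨?_, by linarith [hkey x hx z hz]⟩⟩
  · have := mul_le_mul_of_nonneg_right (rpow_neg_mul_norm_rpow_le_of_mem_ball hβ0.le hx hz) hS0
    linarith [hkey x hx z hz]
  · have := hkey z hz x hx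
    rw [norm_sub_rev] at this
    linarith

/-- Harnack inequality and Hölder continuity (Lemma 10.1). -/
theorem stmt_18 {n : ℕ} (hn : 2 ≤ n) (Ω : Set (EucSp n)) (hΩ : IsBoundedDomain Ω)
    (H : EucSp n → Mat n → ℝ) (hH : Continuous fun q : EucSp n × Mat n => H q.1 q.2)
    (k₁ k₂ : ℝ) (hA : CondA H) (hB : CondB H k₁ k₂) (hC : CondC H k₁ k₂)
    (sb : ℝ) (hsb1 : 1 < sb) (hsb2 : sb < 2) (hm2 : m2 H sb < 0)
    (β : ℝ) (hβ : β = 2 - sb)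
    (a : EucSp n → ℝ) (ha : ContinuousOn a Ω)
    (hainf : 0 < sInf (a '' Ω)) (hasup : BddAbove (a '' Ω))
    (lam : ℝ) (hlam : 0 ≤ lam)
    (w : EucSp n → ℝ) (hwl : LowerSemicontinuousOn w Ω)
    (hwb : ∃ M : ℝ, ∀ x ∈ Ω, |w x| ≤ M) (hw0 : ∀ x ∈ Ω, 0 ≤ w x)
    (hsuper : ViscSuperSoln H (fun x t => lam * a x * spow t (k₁ + k₂)) Ω w) :
    ∃ C > (0 : ℝ), ∀ y ∈ Ω, ∀ R : ℝ, 0 < R → Metric.ball y (4 * R) ⊆ Ω →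
      sSup (w '' Metric.ball y R) ≤ C * sInf (w '' Metric.ball y R) ∧
      ∀ x ∈ Metric.ball y R, ∀ z ∈ Metric.ball y R,
        |w x - w z| ≤ (3 * R) ^ (-β) * sSup (w '' Metric.ball y R) * ‖x - z‖ ^ β :=
  stmt_18_general Ω H k₁ k₂ hB sb hsb2 hm2 β hβ a hainf lam hlam w hwl hwb hw0 hsuper
end
end
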